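/- arXiv:math/0002098 — 3 statements merged into one kernel-verified Lean document; each statement's English description precedes it below -/
import Mathlib

section
/- Let A be a finite set of k relatively prime positive integers and let p_A(n) be the number of partitions of n with parts in A. Then p_A(n) is asymptotically equal to (1/∏_{a∈A} a) · n^{k-1}/(k-1)!, i.e., the ratio p_A(n) / ( n^{k-1} / ((k-1)! · ∏_{a∈A} a) ) tends to 1 as n → ∞. -/
open Filter

/-- The number of partitions of `n` with all parts in the finite set `A`. -/
def partitionsIn (A : Finset ℕ) (n : ℕ) : ℕ :=
  (Finset.univ.filter fun p : Nat.Partition n => ∀ i ∈ p.parts, i ∈ A).card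

/-!
Let `S_A(N)` be the number of partitions with parts in `A` of the integers below `N`, i.e. the
number of lattice points in a simplex of volume `N ^ k / (k! ∏ a)`. Removing one part `a` from the
partitions that use it gives `S_A(N) = S_{A \ {a}}(N) + S_A(N - a)`, and induction on `A` with the
tangent-line bounds for `t ↦ t ^ k` yields `N ^ k ≤ k! ∏ a · S_A(N + 1)` and
`k! ∏ a · S_A(N) ≤ (N + ∑ a) ^ k`. Since `gcd A = 1`, every large `r` is a sum of elements of `A`,
so `p_A(n) ≤ p_A(n + r)`: `p_A` is monotone up to a bounded shift. Comparing `p_A(n)` with the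
averages of `p_A` over windows of length `√n` just before and just after `n` turns the asymptotics
of `S_A` into those of `p_A`.
-/

open Finset Topology
open scoped Nat

theorem partitionsIn_empty (n : ℕ) : partitionsIn ∅ n = if n = 0 then 1 else 0 := by
  unfold partitionsIn
  split_ifs with hn
  · subst hn
    simp
  · simp only [notMem_empty, imp_false, card_eq_zero, filter_eq_empty_iff, mem_univ, true_imp_iff]
    intro p hp
    exact hn (by simpa [Multiset.eq_zero_of_forall_notMem hp] using p.parts_sum.symm)

theorem partitionsIn_erase_of_lt {A : Finset ℕ} {a n : ℕ} (hn : n < a) :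
    partitionsIn (A.erase a) n = partitionsIn A n := by
  unfold partitionsIn
  congr 1
  refine filter_congr fun p _ => forall₂_congr fun i hi => ?_
  have : i ≠ a := ((Nat.Partition.le_of_mem_parts hi).trans_lt hn).ne
  simp [this]

theorem partitionsIn_eq_erase_add {A : Finset ℕ} {a n : ℕ} (haA : a ∈ A) (ha : 1 ≤ a)
    (han : a ≤ n) : partitionsIn A n = partitionsIn (A.erase a) n + partitionsIn A (n - a) := by
  classical
  let e := Nat.Partition.partitionWithPartEquiv ha han
  unfold partitionsIn
  rw [← card_filter_add_card_filter_not (fun p : Nat.Partition n => a ∉ p.parts),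
    filter_filter, filter_filter]
  congr 1
  · congr 1
    refine filter_congr fun p _ => ?_
    simp only [mem_erase]
    grind
  · symm
    refine card_bij (fun q _ => (e.symm q).1) ?_ ?_ ?_
    · intro q hq
      simp only [mem_filter, mem_univ, true_and, e,
        Nat.Partition.partitionWithPartEquiv_symm_apply_parts, Multiset.mem_cons] at hq ⊢
      grind
    · exact fun q _ q' _ h => e.symm.injective (Subtype.ext h)
    · intro p hp
      simp only [mem_filter, mem_univ, true_and, not_not] at hp
      refine ⟨e ⟨p, hp.2⟩, ?_, by simp⟩
      simp only [mem_filter, mem_univ, true_and, e,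
        Nat.Partition.partitionWithPartEquiv_apply_parts]
      exact fun i hi => hp.1 i (Multiset.mem_of_mem_erase hi)

theorem partitionsIn_le_add_of_mem {A : Finset ℕ} {a : ℕ} (haA : a ∈ A) (n : ℕ) :
    partitionsIn A n ≤ partitionsIn A (n + a) := by
  rcases Nat.eq_zero_or_pos a with rfl | ha
  · rfl
  · rw [partitionsIn_eq_erase_add haA ha (Nat.le_add_left a n), Nat.add_sub_cancel]
    exact Nat.le_add_left _ _

theorem partitionsIn_le_add_of_mem_closure {A : Finset ℕ} {r : ℕ}
    (hr : r ∈ AddSubmonoid.closure (A : Set ℕ)) (n : ℕ) :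
    partitionsIn A n ≤ partitionsIn A (n + r) := by
  induction hr using AddSubmonoid.closure_induction generalizing n with
  | mem a ha => exact partitionsIn_le_add_of_mem ha n
  | zero => rfl
  | add x y _ _ hx hy => exact (hx n).trans ((hy (n + x)).trans_eq (by rw [add_assoc]))

theorem exists_partitionsIn_le_add {A : Finset ℕ} (hgcd : A.gcd id = 1) :
    ∃ F, ∀ n r, F ≤ r → partitionsIn A n ≤ partitionsIn A (n + r) := by
  obtain ⟨F, hF⟩ := Nat.exists_mem_closure_of_ge (A : Set ℕ)
  have hdvd : Nat.setGcd A ∣ 1 := hgcd ▸ dvd_gcd fun a ha => Nat.setGcd_dvd_of_mem ha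
  exact ⟨F, fun n r hr => partitionsIn_le_add_of_mem_closure (hF r hr (hdvd.trans (one_dvd r))) n⟩

def partitionsInBelow (A : Finset ℕ) (N : ℕ) : ℕ :=
  ∑ n ∈ range N, partitionsIn A n

theorem partitionsInBelow_empty_succ (N : ℕ) : partitionsInBelow ∅ (N + 1) = 1 := by
  simp [partitionsInBelow, partitionsIn_empty]

theorem partitionsInBelow_empty_le (N : ℕ) : partitionsInBelow ∅ N ≤ 1 :=
  (partitionsInBelow_empty_succ N).le.trans' <|
    sum_le_sum_of_subset (range_subset_range.2 N.le_succ)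

-- For `N ≤ a` the truncated `N - a` is `0`, and `partitionsInBelow A 0 = 0`.
theorem partitionsInBelow_eq_erase_add {A : Finset ℕ} {a : ℕ} (haA : a ∈ A) (ha : 1 ≤ a)
    (N : ℕ) :
    partitionsInBelow A N = partitionsInBelow (A.erase a) N + partitionsInBelow A (N - a) := by
  unfold partitionsInBelow
  rcases le_or_gt N a with hN | hN
  · rw [Nat.sub_eq_zero_of_le hN, range_zero, sum_empty, add_zero]
    exact sum_congr rfl fun n hn => (partitionsIn_erase_of_lt ((mem_range.1 hn).trans_le hN)).symm
  · obtain ⟨M, rfl⟩ := Nat.exists_eq_add_of_le hN.le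
    simp only [sum_range_add, Nat.add_sub_cancel_left]
    rw [sum_congr rfl fun n hn => (partitionsIn_erase_of_lt (mem_range.1 hn)).symm,
      sum_congr rfl fun m _ => partitionsIn_eq_erase_add haA ha (Nat.le_add_right a m),
      sum_add_distrib]
    simp only [Nat.add_sub_cancel_left]
    ring

theorem pow_succ_add_mul_sub_le {R : Type*} [CommRing R] [LinearOrder R] [IsStrictOrderedRing R]
    {u v : R} (hu : 0 ≤ u) (hv : 0 ≤ v) (k : ℕ) :
    u ^ (k + 1) + (k + 1) * u ^ k * (v - u) ≤ v ^ (k + 1) := by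
  simpa using pow_add_mul_le_add_pow hu (by linarith : 0 ≤ 2 * u + (v - u)) (k + 1)

theorem pow_card_le_mul_partitionsInBelow {A : Finset ℕ} (hpos : ∀ a ∈ A, 0 < a) (N : ℕ) :
    (N : ℝ) ^ #A ≤ (#A)! * (∏ a ∈ A, (a : ℝ)) * partitionsInBelow A (N + 1) := by
  induction A using Finset.induction_on generalizing N with
  | empty => simp [partitionsInBelow_empty_succ]
  | insert a B haB ih =>
    have ha : 1 ≤ a := hpos a (mem_insert_self a B)
    have hB := ih fun x hx => hpos x (mem_insert_of_mem hx)
    induction N using Nat.strong_induction_on with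
    | _ N ihN =>
    rw [card_insert_of_notMem haB, prod_insert haB, Nat.factorial_succ] at ihN ⊢
    set j := #B
    set v : ℝ := ((N - a : ℕ) : ℝ)
    have hrest : v ^ (j + 1) ≤ ((j + 1) * j ! : ℕ) * (a * ∏ x ∈ B, (x : ℝ)) *
        partitionsInBelow (insert a B) (N + 1 - a) := by
      rcases le_or_gt a N with haN | hNa
      · rw [show N + 1 - a = N - a + 1 by omega]
        exact ihN (N - a) (by omega)
      · simp only [v, Nat.sub_eq_zero_of_le hNa.le, Nat.cast_zero, zero_pow j.succ_ne_zero]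
        positivity
    have hNv : (N : ℝ) - v ≤ a := by
      simp only [v]
      rcases le_or_gt a N with haN | hNa
      · rw [Nat.cast_sub haN]; linarith
      · rw [Nat.sub_eq_zero_of_le hNa.le, Nat.cast_zero, sub_zero]
        exact_mod_cast hNa.le
    have htangent := pow_succ_add_mul_sub_le (Nat.cast_nonneg (α := ℝ) N)
      (Nat.cast_nonneg (α := ℝ) (N - a)) j
    have hmv := mul_le_mul_of_nonneg_left hNv (by positivity : (0 : ℝ) ≤ (j + 1) * N ^ j)
    have hBN := mul_le_mul_of_nonneg_left (hB N) (by positivity : (0 : ℝ) ≤ (j + 1) * a)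
    rw [partitionsInBelow_eq_erase_add (mem_insert_self a B) ha, erase_insert haB]
    push_cast at hrest ⊢
    linarith

theorem mul_partitionsInBelow_le {A : Finset ℕ} (hpos : ∀ a ∈ A, 0 < a) (N : ℕ) :
    (#A)! * (∏ a ∈ A, (a : ℝ)) * partitionsInBelow A N ≤ (N + ∑ a ∈ A, (a : ℝ)) ^ #A := by
  induction A using Finset.induction_on generalizing N with
  | empty => simpa using partitionsInBelow_empty_le N
  | insert a B haB ih =>
    have ha : 1 ≤ a := hpos a (mem_insert_self a B)
    have hB := ih fun x hx => hpos x (mem_insert_of_mem hx)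
    induction N using Nat.strong_induction_on with
    | _ N ihN =>
    rw [card_insert_of_notMem haB, sum_insert haB, prod_insert haB, Nat.factorial_succ] at ihN ⊢
    set j := #B
    set s := ∑ x ∈ B, (x : ℝ)
    have hrest : ((j + 1) * j ! : ℕ) * (a * ∏ x ∈ B, (x : ℝ)) *
        partitionsInBelow (insert a B) (N - a) ≤ (N + s) ^ (j + 1) := by
      rcases le_or_gt a N with haN | hNa
      · have := ihN (N - a) (by omega)
        rwa [Nat.cast_sub haN, show (N - a : ℝ) + (a + s) = N + s by ring] at this
      · simp only [Nat.sub_eq_zero_of_le hNa.le, partitionsInBelow, range_zero, sum_empty,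
          Nat.cast_zero, mul_zero]
        positivity
    have htangent := pow_succ_add_mul_sub_le (R := ℝ) (u := N + s) (v := N + s + a)
      (by positivity) (by positivity) j
    have hBN := mul_le_mul_of_nonneg_left (hB N) (by positivity : (0 : ℝ) ≤ (j + 1) * a)
    rw [partitionsInBelow_eq_erase_add (mem_insert_self a B) ha, erase_insert haB,
      show (N : ℝ) + (a + s) = N + s + a by ring]
    push_cast at hrest ⊢
    linarith

theorem tendsto_natSqrt_atTop : Tendsto (fun n : ℕ => (Nat.sqrt n : ℝ)) atTop atTop := by
  refine tendsto_atTop_mono (fun n => ?_) <| tendsto_atTop_add_const_right _ (-1) <|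
    Real.tendsto_sqrt_atTop.comp tendsto_natCast_atTop_atTop
  simpa using Real.real_sqrt_le_nat_sqrt_succ (a := n)

theorem tendsto_natSqrt_div_self : Tendsto (fun n : ℕ => (Nat.sqrt n : ℝ) / n) atTop (𝓝 0) := by
  have h : Tendsto (fun n : ℕ => √(n : ℝ) / n) atTop (𝓝 0) := by
    simpa [Real.sqrt_div_self', Function.comp_def] using
      tendsto_inv_atTop_zero.comp (Real.tendsto_sqrt_atTop.comp tendsto_natCast_atTop_atTop)
  exact squeeze_zero (fun n => by positivity)
    (fun n => div_le_div_of_nonneg_right Real.nat_sqrt_le_real_sqrt n.cast_nonneg) h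

section SumRangeBounds

variable {f : ℕ → ℝ} {C s : ℝ} {b F : ℕ}

theorem mul_le_of_sum_range_bounds (hC : 0 ≤ C) (hs : 0 ≤ s)
    (hmono : ∀ n r, F ≤ r → f n ≤ f (n + r))
    (hlow : ∀ N : ℕ, (N : ℝ) ^ (b + 1) ≤ C * ∑ n ∈ range (N + 1), f n)
    (hup : ∀ N : ℕ, C * ∑ n ∈ range N, f n ≤ (N + s) ^ (b + 1)) (n w : ℕ) :
    C * (w * f n) ≤ (b + 1) * (w + (s + 1)) * (n + (F + 1 + s) + w) ^ b := by
  have hwindow : (w : ℝ) * f n ≤ ∑ i ∈ range w, f (n + F + 1 + i) := by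
    simpa [add_assoc] using sum_le_sum fun i (_ : i ∈ range w) => hmono n (F + 1 + i) (by omega)
  have h1 := hup (n + F + 1 + w)
  have h2 := hlow (n + F)
  have htangent := pow_succ_add_mul_sub_le (R := ℝ) (u := n + (F + 1 + s) + w) (v := n + F)
    (by positivity) (by positivity) b
  have h3 := mul_le_mul_of_nonneg_left hwindow hC
  rw [sum_range_add, mul_add] at h1
  push_cast at h1 h2
  rw [show (n : ℝ) + F + 1 + w + s = n + (F + 1 + s) + w by ring] at h1
  linarith

theorem le_mul_of_sum_range_bounds (hC : 0 ≤ C) (hs : 0 ≤ s)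
    (hmono : ∀ n r, F ≤ r → f n ≤ f (n + r))
    (hlow : ∀ N : ℕ, (N : ℝ) ^ (b + 1) ≤ C * ∑ n ∈ range (N + 1), f n)
    (hup : ∀ N : ℕ, C * ∑ n ∈ range N, f n ≤ (N + s) ^ (b + 1)) {n w : ℕ} (hn : F + w ≤ n) :
    (b + 1) * (w - (s + 1)) * (n + (1 + s - F) - w) ^ b ≤ C * (w * f n) := by
  obtain ⟨y, rfl⟩ := Nat.exists_eq_add_of_le hn
  have hwindow : ∑ i ∈ range w, f (y + 1 + i) ≤ w * f (F + w + y) := by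
    refine (sum_le_sum fun i hi => ?_).trans_eq (by simp : ∑ i ∈ range w, f (F + w + y) = _)
    have hi := mem_range.1 hi
    simpa [show y + 1 + i + (F + w - 1 - i) = F + w + y by omega] using
      hmono (y + 1 + i) (F + w - 1 - i) (by omega)
  have h1 := hlow (y + w)
  have h2 := hup (y + 1)
  have htangent := pow_succ_add_mul_sub_le (R := ℝ) (u := y + 1 + s) (v := y + w)
    (by positivity) (by positivity) b
  have h3 := mul_le_mul_of_nonneg_left hwindow hC
  rw [show y + w + 1 = y + 1 + w by ring, sum_range_add, mul_add] at h1
  push_cast at h1 h2 ⊢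
  rw [show (F : ℝ) + w + y + (1 + s - F) - w = y + 1 + s by ring]
  linarith

theorem tendsto_div_of_sum_range_bounds (hC : 0 < C) (hs : 0 ≤ s)
    (hmono : ∀ n r, F ≤ r → f n ≤ f (n + r))
    (hlow : ∀ N : ℕ, (N : ℝ) ^ (b + 1) ≤ C * ∑ n ∈ range (N + 1), f n)
    (hup : ∀ N : ℕ, C * ∑ n ∈ range N, f n ≤ (N + s) ^ (b + 1)) :
    Tendsto (fun n => f n / ((b + 1) * n ^ b / C)) atTop (𝓝 1) := by
  have hw := tendsto_natSqrt_atTop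
  have hwinv : Tendsto (fun n => (s + 1) / Nat.sqrt n) atTop (𝓝 0) :=
    tendsto_const_nhds.div_atTop hw
  have hdiv (c : ℝ) : Tendsto (fun n : ℕ => c / n) atTop (𝓝 0) :=
    tendsto_const_nhds.div_atTop tendsto_natCast_atTop_atTop
  have hwdiv := tendsto_natSqrt_div_self
  refine tendsto_of_tendsto_of_tendsto_of_le_of_le'
    (g := fun n => (1 - (s + 1) / Nat.sqrt n) * (1 + (1 + s - F) / n - Nat.sqrt n / n) ^ b)
    (h := fun n => (1 + (s + 1) / Nat.sqrt n) * (1 + (F + 1 + s) / n + Nat.sqrt n / n) ^ b)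
    ?_ ?_ ?_ ?_
  · simpa using (tendsto_const_nhds (x := (1 : ℝ))).sub hwinv |>.mul
      ((((tendsto_const_nhds (x := (1 : ℝ))).add (hdiv (1 + s - F))).sub hwdiv).pow b)
  · simpa using (tendsto_const_nhds (x := (1 : ℝ))).add hwinv |>.mul
      ((((tendsto_const_nhds (x := (1 : ℝ))).add (hdiv (F + 1 + s))).add hwdiv).pow b)
  · filter_upwards [eventually_ge_atTop 1, hw.eventually_ge_atTop (F + 2)] with n hn hFw
    have hFn : F + Nat.sqrt n ≤ n := by
      have : F + 2 ≤ Nat.sqrt n := by exact_mod_cast hFw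
      nlinarith [Nat.sqrt_le' n]
    have hwpos : (0 : ℝ) < Nat.sqrt n := by exact_mod_cast Nat.sqrt_pos.2 hn
    have hnpos : (0 : ℝ) < n := by exact_mod_cast hn
    have key := le_mul_of_sum_range_bounds hC.le hs hmono hlow hup hFn
    rw [show 1 - (s + 1) / Nat.sqrt n = (Nat.sqrt n - (s + 1)) / Nat.sqrt n by field_simp,
      show 1 + (1 + s - F) / n - Nat.sqrt n / n = (n + (1 + s - F) - Nat.sqrt n) / n by
        field_simp,
      div_pow, le_div_iff₀ (by positivity)]
    field_simp
    linarith
  · filter_upwards [eventually_ge_atTop 1] with n hn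
    have hwpos : (0 : ℝ) < Nat.sqrt n := by exact_mod_cast Nat.sqrt_pos.2 hn
    have hnpos : (0 : ℝ) < n := by exact_mod_cast hn
    have key := mul_le_of_sum_range_bounds hC.le hs hmono hlow hup n (Nat.sqrt n)
    rw [show 1 + (s + 1) / Nat.sqrt n = (Nat.sqrt n + (s + 1)) / Nat.sqrt n by field_simp,
      show 1 + (F + 1 + s) / n + Nat.sqrt n / n = (n + (F + 1 + s) + Nat.sqrt n) / n by
        field_simp,
      div_pow, div_le_iff₀ (by positivity)]
    field_simp
    linarith

end SumRangeBounds

/-- Let `A` be a finite set of `k` relatively prime positive integers. Then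
`p_A(n) / (n^(k-1) / ((k-1)! · ∏_{a ∈ A} a)) → 1` as `n → ∞`. -/
theorem partitionsIn_ratio_tendsto_one (A : Finset ℕ) (hpos : ∀ a ∈ A, 0 < a)
    (hgcd : A.gcd id = 1) :
    Tendsto (fun n : ℕ => (partitionsIn A n : ℝ) /
        ((n : ℝ) ^ (A.card - 1) / (Nat.factorial (A.card - 1) * ∏ a ∈ A, (a : ℝ))))
      atTop (nhds 1) := by
  have hA : A.Nonempty := nonempty_iff_ne_empty.2 fun h => by simp [h] at hgcd
  obtain ⟨b, hb⟩ := Nat.exists_eq_add_one.2 hA.card_pos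
  obtain ⟨F, hF⟩ := exists_partitionsIn_le_add hgcd
  have hprod : 0 < ∏ a ∈ A, (a : ℝ) := prod_pos fun a ha => by exact_mod_cast hpos a ha
  have key := tendsto_div_of_sum_range_bounds (f := fun n => (partitionsIn A n : ℝ))
    (C := (b + 1)! * ∏ a ∈ A, (a : ℝ)) (s := ∑ a ∈ A, (a : ℝ)) (b := b)
    (mul_pos (by positivity) hprod) (sum_nonneg fun a _ => Nat.cast_nonneg a)
    (fun n r hr => by exact_mod_cast hF n r hr)
    (fun N => by simpa [hb, partitionsInBelow] using pow_card_le_mul_partitionsInBelow hpos N)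
    (fun N => by simpa [hb, partitionsInBelow] using mul_partitionsInBelow_le hpos N)
  refine key.congr fun n => ?_
  rw [hb, Nat.add_sub_cancel, Nat.factorial_succ]
  push_cast
  field_simp
end

section
/- Let A = {1, 2, ..., k} be the set of the first k positive integers and let p_A(n) be the number of partitions of n with parts in A. Then p_A(n) is asymptotically equal to n^{k-1}/(k!·(k-1)!) as n → ∞. -/
open Filter

/-!
Taking multiplicities and then partial sums, a partition of `n` into parts from `{1, …, k}`
becomes a monotone `k`-tuple of naturals with sum `n` (its conjugate partition). Sorting maps
the `C(n + k - 1, k - 1)` weak compositions of `n` into `k` parts onto these tuples with fibres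
of size at most `k!`. Conversely, adding `(0, 1, …, k - 1)` makes a monotone tuple strictly
increasing with sum `n + k(k-1)/2`, and the `k!` rearrangements of a strictly increasing tuple
are distinct compositions. Hence `k! (k-1)! p_A(n)` lies between `n^(k-1)` and `(n + c)^(k-1)`
for a constant `c`.
-/

open Finset
open scoped Nat

section Sorting

variable {k : ℕ} {α : Type*} [LinearOrder α] {s : Finset (Fin k → α)}

theorem card_le_factorial_mul_card_filter_monotone
    (hs : ∀ x ∈ s, ∀ σ : Equiv.Perm (Fin k), x ∘ σ ∈ s) :
    #s ≤ k ! * #(s.filter Monotone) := by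
  classical
  have hfiber (y : Fin k → α) : #(s.filter fun x => x ∘ Tuple.sort x = y) ≤ k ! := by
    calc #(s.filter fun x => x ∘ Tuple.sort x = y)
        ≤ #(univ.image fun σ : Equiv.Perm (Fin k) => y ∘ σ) := by
          refine card_le_card fun x hx => mem_image.2 ⟨(Tuple.sort x)⁻¹, mem_univ _, ?_⟩
          rw [← (mem_filter.1 hx).2]
          ext i
          simp
      _ ≤ k ! := card_image_le.trans (by simp [Fintype.card_perm])
  calc #s ≤ k ! * #(s.image fun x => x ∘ Tuple.sort x) :=
        card_le_mul_card_image _ _ fun y _ => hfiber y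
    _ ≤ k ! * #(s.filter Monotone) := by
        gcongr
        intro y hy
        obtain ⟨x, hx, rfl⟩ := mem_image.1 hy
        exact mem_filter.2 ⟨hs x hx _, Tuple.monotone_sort x⟩

theorem factorial_mul_card_filter_strictMono_le
    (hs : ∀ x ∈ s, ∀ σ : Equiv.Perm (Fin k), x ∘ σ ∈ s) :
    k ! * #(s.filter StrictMono) ≤ #s := by
  have hinj : Set.InjOn (fun p : Equiv.Perm (Fin k) × (Fin k → α) => p.2 ∘ p.1)
      (univ ×ˢ s.filter StrictMono) := by
    rintro ⟨σ, x⟩ hx ⟨τ, y⟩ hy (h : x ∘ σ = y ∘ τ)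
    simp only [coe_filter, Set.mem_prod, mem_coe, mem_univ, Set.mem_ofPred_eq, true_and] at hx hy
    obtain rfl : x = y := (hx.2.range_inj hy.2).1 <| by
      rw [← σ.surjective.range_comp, h, τ.surjective.range_comp]
    obtain rfl : σ = τ := Equiv.ext fun i => hx.2.injective (congrFun h i)
    rfl
  have := card_le_card_of_injOn _
    (fun p hp => hs _ (mem_filter.1 (mem_product.1 hp).2).1 _) (by rw [coe_product]; exact hinj)
  rwa [card_product, card_univ, Fintype.card_perm, Fintype.card_fin] at this

end Sorting

theorem comp_perm_mem_piAntidiag_univ {ι : Type*} [Fintype ι] [DecidableEq ι] {n : ℕ}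
    {x : ι → ℕ} (hx : x ∈ piAntidiag univ n) (σ : Equiv.Perm ι) :
    x ∘ σ ∈ piAntidiag univ n := by
  simpa [Equiv.sum_comp σ x] using hx

theorem card_piAntidiag_univ_fin (r n : ℕ) :
    #(piAntidiag (univ : Finset (Fin (r + 1))) n) = (n + r).choose r := by
  rw [← map_sym_eq_piAntidiag, card_map, sym_univ, ← Fintype.card, Sym.card_sym_eq_choose,
    Fintype.card_fin, add_right_comm, Nat.add_sub_cancel, add_comm r n, Nat.choose_symm_add]

theorem card_filter_monotone_le_card_filter_strictMono (k n : ℕ) :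
    #((piAntidiag (univ : Finset (Fin k)) n).filter Monotone) ≤
      #((piAntidiag (univ : Finset (Fin k)) (n + ∑ i : Fin k, (i : ℕ))).filter StrictMono) := by
  refine card_le_card_of_injOn (fun x i => x i + i) (fun x hx => ?_)
    fun x _ y _ h => funext fun i => by simpa using congrFun h i
  simp only [coe_filter, Set.mem_ofPred_eq, mem_piAntidiag, mem_univ, implies_true, and_true]
    at hx ⊢
  exact ⟨by rw [sum_add_distrib, hx.1], hx.2.add_strictMono Fin.val_strictMono⟩

section PrefixSum

def prefixSum {k : ℕ} (x : Fin k → ℕ) (j : Fin k) : ℕ := ∑ i ∈ Iic j, x i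

def successiveDiff {r : ℕ} (μ : Fin (r + 1) → ℕ) : Fin (r + 1) → ℕ :=
  Fin.cons (μ 0) fun i => μ i.succ - μ i.castSucc

theorem monotone_prefixSum {k : ℕ} (x : Fin k → ℕ) : Monotone (prefixSum x) :=
  fun _ _ h => sum_le_sum_of_subset (Iic_subset_Iic.2 h)

theorem sum_prefixSum {k : ℕ} (x : Fin k → ℕ) :
    ∑ j, prefixSum x j = ∑ i : Fin k, (k - i) * x i := by
  simp only [prefixSum]
  rw [sum_comm' (t' := univ) (s' := Ici) (by simp)]
  simp [Fin.card_Ici]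

variable {r : ℕ}

theorem prefixSum_zero (x : Fin (r + 1) → ℕ) : prefixSum x 0 = x 0 := by
  rw [prefixSum, ← bot_eq_zero, Iic_bot, sum_singleton]

theorem prefixSum_succ (x : Fin (r + 1) → ℕ) (i : Fin r) :
    prefixSum x i.succ = prefixSum x i.castSucc + x i.succ := by
  have : Iic i.succ = insert i.succ (Iic i.castSucc) := by
    ext j
    simp only [mem_Iic, mem_insert, Fin.le_def, Fin.ext_iff, Fin.val_succ, Fin.val_castSucc]
    omega
  rw [prefixSum, this, sum_insert (by simp [Fin.le_def]), add_comm]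
  rfl

theorem prefixSum_successiveDiff {μ : Fin (r + 1) → ℕ} (hμ : Monotone μ) :
    prefixSum (successiveDiff μ) = μ := by
  funext j
  induction j using Fin.induction with
  | zero => simp [prefixSum_zero, successiveDiff]
  | succ i ih =>
    have := Fin.monotone_iff_le_succ.1 hμ i
    rw [prefixSum_succ, ih]
    simp only [successiveDiff, Fin.cons_succ]
    omega

theorem successiveDiff_prefixSum (x : Fin (r + 1) → ℕ) :
    successiveDiff (prefixSum x) = x := by
  funext j
  cases j using Fin.cases with
  | zero => simp [successiveDiff, prefixSum_zero]
  | succ i => simp [successiveDiff, prefixSum_succ]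

end PrefixSum

section Multiplicities

variable {k : ℕ}

/-- Part `k - i` is listed first so that prefix sums of the multiplicities, which weight `x i` by
`k - i` (`sum_prefixSum`), give the conjugate partition. -/
def ofMultiplicities (x : Fin k → ℕ) : Multiset ℕ := ∑ i, Multiset.replicate (x i) (k - i)

theorem mem_Icc_of_mem_ofMultiplicities {x : Fin k → ℕ} {a : ℕ}
    (ha : a ∈ ofMultiplicities x) : a ∈ Icc 1 k := by
  obtain ⟨i, -, hi⟩ := Multiset.mem_sum.1 ha
  have := Multiset.eq_of_mem_replicate hi
  have := i.isLt
  rw [mem_Icc]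
  omega

theorem sum_ofMultiplicities (x : Fin k → ℕ) :
    (ofMultiplicities x).sum = ∑ i : Fin k, (k - i) * x i := by
  simp [ofMultiplicities, Multiset.sum_sum, mul_comm]

theorem count_ofMultiplicities (x : Fin k → ℕ) (i : Fin k) :
    (ofMultiplicities x).count (k - i) = x i := by
  rw [ofMultiplicities, Multiset.count_sum', sum_eq_single i]
  · simp
  · intro j _ hji
    refine Multiset.count_eq_zero.2 fun h => hji (Fin.ext ?_)
    have := Multiset.eq_of_mem_replicate h
    omega
  · simp

theorem ofMultiplicities_count {s : Multiset ℕ} (hs : ∀ a ∈ s, a ∈ Icc 1 k) :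
    ofMultiplicities (fun i : Fin k => s.count (k - i)) = s := by
  ext a
  by_cases ha : a ∈ Icc 1 k
  · obtain ⟨i, rfl⟩ : ∃ i : Fin k, k - i = a := ⟨⟨k - a, by grind⟩, by grind⟩
    exact count_ofMultiplicities _ i
  · rw [Multiset.count_eq_zero.2 fun h => ha (mem_Icc_of_mem_ofMultiplicities h),
      Multiset.count_eq_zero.2 fun h => ha (hs a h)]

end Multiplicities

theorem partitionsIn_Icc_eq_card_filter_monotone (r n : ℕ) :
    partitionsIn (Icc 1 (r + 1)) n =
      #((piAntidiag (univ : Finset (Fin (r + 1))) n).filter Monotone) := by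
  refine card_bij' (fun p _ => prefixSum fun i => p.parts.count (r + 1 - i))
    (fun μ hμ => ⟨ofMultiplicities (successiveDiff μ),
      fun ha => (mem_Icc.1 (mem_Icc_of_mem_ofMultiplicities ha)).1, ?_⟩) ?_ ?_ ?_ ?_
  · rw [sum_ofMultiplicities, ← sum_prefixSum, prefixSum_successiveDiff (mem_filter.1 hμ).2]
    simpa using (mem_filter.1 hμ).1
  · intro p hp
    simp only [mem_filter, mem_univ, true_and] at hp
    simp only [mem_filter, mem_piAntidiag, mem_univ, implies_true, and_true]
    refine ⟨?_, monotone_prefixSum _⟩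
    rw [sum_prefixSum, ← sum_ofMultiplicities, ofMultiplicities_count hp, p.parts_sum]
  · intro μ _
    simp only [mem_filter, mem_univ, true_and]
    exact fun a ha => mem_Icc_of_mem_ofMultiplicities ha
  · intro p hp
    simp only [mem_filter, mem_univ, true_and] at hp
    ext1
    simp only [successiveDiff_prefixSum, ofMultiplicities_count hp]
  · intro μ hμ
    simp only [count_ofMultiplicities, prefixSum_successiveDiff (mem_filter.1 hμ).2]

theorem pow_le_partitionsIn_Icc_mul (r n : ℕ) :
    n ^ r ≤ partitionsIn (Icc 1 (r + 1)) n * ((r + 1)! * r !) := by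
  calc n ^ r ≤ (n + r).descFactorial r :=
        (Nat.pow_le_pow_left (by omega) r).trans (Nat.pow_sub_le_descFactorial (n + r) r)
    _ = r ! * #(piAntidiag (univ : Finset (Fin (r + 1))) n) := by
        rw [Nat.descFactorial_eq_factorial_mul_choose, card_piAntidiag_univ_fin]
    _ ≤ r ! * ((r + 1)! * #((piAntidiag (univ : Finset (Fin (r + 1))) n).filter Monotone)) := by
        gcongr
        exact card_le_factorial_mul_card_filter_monotone fun _ hx =>
          comp_perm_mem_piAntidiag_univ hx
    _ = partitionsIn (Icc 1 (r + 1)) n * ((r + 1)! * r !) := by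
        rw [partitionsIn_Icc_eq_card_filter_monotone]
        ring

theorem exists_partitionsIn_Icc_mul_le_add_pow (r : ℕ) :
    ∃ c : ℕ, ∀ n, partitionsIn (Icc 1 (r + 1)) n * ((r + 1)! * r !) ≤ (n + c) ^ r := by
  set T := ∑ i : Fin (r + 1), (i : ℕ)
  refine ⟨T + r, fun n => ?_⟩
  calc partitionsIn (Icc 1 (r + 1)) n * ((r + 1)! * r !)
      = r ! * ((r + 1)! * #((piAntidiag (univ : Finset (Fin (r + 1))) n).filter Monotone)) := by
        rw [partitionsIn_Icc_eq_card_filter_monotone]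
        ring
    _ ≤ r ! * ((r + 1)! *
          #((piAntidiag (univ : Finset (Fin (r + 1))) (n + T)).filter StrictMono)) := by
        gcongr r ! * ((r + 1)! * ?_)
        exact card_filter_monotone_le_card_filter_strictMono _ _
    _ ≤ r ! * #(piAntidiag (univ : Finset (Fin (r + 1))) (n + T)) := by
        gcongr
        exact factorial_mul_card_filter_strictMono_le fun _ hx => comp_perm_mem_piAntidiag_univ hx
    _ = (n + (T + r)).descFactorial r := by
        rw [card_piAntidiag_univ_fin, ← Nat.descFactorial_eq_factorial_mul_choose, add_assoc]
    _ ≤ (n + (T + r)) ^ r := Nat.descFactorial_le_pow _ _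

theorem tendsto_div_pow_of_pow_le_of_le_add_pow {a : ℕ → ℝ} (r : ℕ) (c : ℝ)
    (hlow : ∀ n : ℕ, (n : ℝ) ^ r ≤ a n) (hup : ∀ n : ℕ, a n ≤ ((n : ℝ) + c) ^ r) :
    Tendsto (fun n => a n / (n : ℝ) ^ r) atTop (nhds 1) := by
  have hlim : Tendsto (fun n : ℕ => (1 + c / n) ^ r) atTop (nhds 1) := by
    simpa using ((tendsto_const_div_atTop_nhds_zero_nat c).const_add 1).pow r
  refine tendsto_of_tendsto_of_tendsto_of_le_of_le' tendsto_const_nhds hlim ?_ ?_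
  all_goals filter_upwards [eventually_gt_atTop 0] with n hn
  · rw [le_div_iff₀ (by positivity), one_mul]
    exact hlow n
  · rw [div_le_iff₀ (by positivity), ← mul_pow, add_mul, div_mul_cancel₀ _ (by positivity),
      one_mul]
    linarith [hup n]

/-- For `A = {1, 2, ..., k}`, the number of partitions of `n` with parts in `A`
is asymptotic to `n^(k-1) / (k! · (k-1)!)` as `n → ∞`. -/
theorem partitionsIn_Icc_ratio_tendsto_one (k : ℕ) (hk : 0 < k) :
    Tendsto (fun n : ℕ => (partitionsIn (Finset.Icc 1 k) n : ℝ) /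
        ((n : ℝ) ^ (k - 1) / (Nat.factorial k * Nat.factorial (k - 1))))
      atTop (nhds 1) := by
  obtain ⟨r, rfl⟩ : ∃ r, k = r + 1 := ⟨k - 1, by omega⟩
  obtain ⟨c, hup⟩ := exists_partitionsIn_Icc_mul_le_add_pow r
  refine (tendsto_div_pow_of_pow_le_of_le_add_pow
    (a := fun n => ((partitionsIn (Icc 1 (r + 1)) n * ((r + 1)! * r !) : ℕ) : ℝ)) r c
    (fun n => by exact_mod_cast pow_le_partitionsIn_Icc_mul r n)
    (fun n => by exact_mod_cast hup n)).congr fun n => ?_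
  rw [Nat.add_sub_cancel, div_div_eq_mul_div]
  push_cast
  rfl
end

section
/- Let A = {a_1, ..., a_k} be a set of k ≥ 2 positive integers with gcd(a_1, ..., a_k) = 1, let d = gcd(a_1, ..., a_{k-1}), and suppose all of a_1, ..., a_{k-1} are divisible by d with a_i' = a_i/d and A' = {a_1', ..., a_{k-1}'}. Let n ≥ (d-1)·a_k, let u be the unique integer with 0 ≤ u ≤ d-1 and n ≡ u·a_k (mod d), let m = (n - u·a_k)/d, and let r = ⌊m/a_k⌋. Then p_A(n) = Σ_{ℓ=0}^{r} p_{A'}(m - ℓ·a_k). -/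
def partitionMultisets (A : Finset ℕ) (N : ℕ) : Finset (Multiset ℕ) :=
  (Finset.univ.filter fun p : Nat.Partition N => ∀ i ∈ p.parts, i ∈ A).image
    Nat.Partition.parts

theorem card_partitionMultisets (A : Finset ℕ) (N : ℕ) :
    (partitionMultisets A N).card = partitionsIn A N :=
  Finset.card_image_of_injective _ fun _ _ => Nat.Partition.ext

theorem mem_partitionMultisets {A : Finset ℕ} {N : ℕ} {s : Multiset ℕ} :
    s ∈ partitionMultisets A N ↔ s.sum = N ∧ ∀ i ∈ s, i ∈ A ∧ 0 < i := by
  simp only [partitionMultisets, Finset.mem_image, Finset.mem_filter, Finset.mem_univ, true_and]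
  constructor
  · rintro ⟨p, hp, rfl⟩
    exact ⟨p.parts_sum, fun i hi => ⟨hp i hi, p.parts_pos hi⟩⟩
  · rintro ⟨hsum, hs⟩
    exact ⟨⟨s, fun hi => (hs _ hi).2, hsum⟩, fun i hi => (hs i hi).1, rfl⟩

theorem partitionMultisets_insert {a : ℕ} {B : Finset ℕ} (ha : 0 < a) (N : ℕ) :
    partitionMultisets (insert a B) N = (Finset.range (N / a + 1)).biUnion fun j =>
      (partitionMultisets B (N - j * a)).image (· + Multiset.replicate j a) := by
  ext s
  simp only [Finset.mem_biUnion, Finset.mem_range, Nat.lt_succ_iff, Finset.mem_image,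
    mem_partitionMultisets, Finset.mem_insert]
  constructor
  · rintro ⟨rfl, hs⟩
    have hsplit : s.filter (· ≠ a) + Multiset.replicate (s.count a) a = s := by
      rw [← Multiset.filter_eq', add_comm]
      exact Multiset.filter_add_not _ s
    have hsum : (s.filter (· ≠ a)).sum + s.count a * a = s.sum := by
      conv_rhs => rw [← hsplit]
      rw [Multiset.sum_add, Multiset.sum_replicate, smul_eq_mul]
    refine ⟨s.count a, (Nat.le_div_iff_mul_le ha).2 (by omega), s.filter (· ≠ a),
      ⟨by omega, fun i hi => ?_⟩, hsplit⟩
    rw [Multiset.mem_filter] at hi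
    obtain ⟨h | h, hpos⟩ := hs i hi.1
    · exact absurd h hi.2
    · exact ⟨h, hpos⟩
  · rintro ⟨j, hj, t, ⟨ht, htB⟩, rfl⟩
    have : j * a ≤ N := (Nat.le_div_iff_mul_le ha).1 hj
    refine ⟨by simp only [Multiset.sum_add, ht, Multiset.sum_replicate, smul_eq_mul]; omega,
      fun i hi => ?_⟩
    rcases Multiset.mem_add.1 hi with h | h
    · exact ⟨Or.inr (htB i h).1, (htB i h).2⟩
    · rw [Multiset.eq_of_mem_replicate h]
      exact ⟨Or.inl rfl, ha⟩

theorem partitionsIn_insert {a : ℕ} {B : Finset ℕ} (ha : 0 < a) (haB : a ∉ B) (N : ℕ) :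
    partitionsIn (insert a B) N = ∑ j ∈ Finset.range (N / a + 1), partitionsIn B (N - j * a) := by
  have hcount : ∀ j, ∀ s ∈ (partitionMultisets B (N - j * a)).image
      (· + Multiset.replicate j a), s.count a = j := by
    simp only [Finset.mem_image, mem_partitionMultisets]
    rintro j _ ⟨t, ⟨-, ht⟩, rfl⟩
    simp [Multiset.count_eq_zero.2 fun h => haB (ht a h).1]
  rw [← card_partitionMultisets, partitionMultisets_insert ha, Finset.card_biUnion]
  · simp_rw [Finset.card_image_of_injective _ (add_left_injective _), card_partitionMultisets]
  · intro i _ j _ hij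
    exact Finset.disjoint_left.2 fun s hi hj => hij ((hcount i s hi).symm.trans (hcount j s hj))

theorem partitionMultisets_image_mul {d : ℕ} (hd : 0 < d) (B : Finset ℕ) (M : ℕ) :
    partitionMultisets (B.image (d * ·)) (d * M) =
      (partitionMultisets B M).image (Multiset.map (d * ·)) := by
  ext s
  simp only [Finset.mem_image, mem_partitionMultisets]
  constructor
  · rintro ⟨hsum, hs⟩
    have hs' : ∀ i ∈ s, ∃ b ∈ B, 0 < b ∧ d * b = i := fun i hi => by
      obtain ⟨hi, hpos⟩ := hs i hi
      obtain ⟨b, hb, rfl⟩ := hi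
      exact ⟨b, hb, Nat.pos_of_mul_pos_left hpos, rfl⟩
    have hmap : (s.map (· / d)).map (d * ·) = s := by
      rw [Multiset.map_map]
      conv_rhs => rw [← Multiset.map_id s]
      refine Multiset.map_congr rfl fun i hi => ?_
      obtain ⟨b, -, -, rfl⟩ := hs' i hi
      simp [hd.ne']
    refine ⟨s.map (· / d), ⟨?_, fun i hi => ?_⟩, hmap⟩
    · apply Nat.eq_of_mul_eq_mul_left hd
      conv_rhs => rw [← hsum, ← hmap]
      rw [Multiset.sum_map_mul_left, Multiset.map_id']
    · obtain ⟨x, hx, rfl⟩ := Multiset.mem_map.1 hi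
      obtain ⟨b, hb, hbpos, rfl⟩ := hs' x hx
      simpa [hd.ne'] using ⟨hb, hbpos⟩
  · rintro ⟨t, ⟨rfl, ht⟩, rfl⟩
    refine ⟨by rw [Multiset.sum_map_mul_left, Multiset.map_id'], ?_⟩
    simp only [Multiset.mem_map]
    rintro _ ⟨b, hb, rfl⟩
    exact ⟨⟨b, (ht b hb).1, rfl⟩, Nat.mul_pos hd (ht b hb).2⟩

theorem partitionsIn_image_mul {d : ℕ} (hd : 0 < d) (B : Finset ℕ) (M : ℕ) :
    partitionsIn (B.image (d * ·)) (d * M) = partitionsIn B M := by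
  rw [← card_partitionMultisets, partitionMultisets_image_mul hd, Finset.card_image_of_injective _
    (Multiset.map_injective (mul_right_injective₀ hd.ne')), card_partitionMultisets]

theorem partitionsIn_mul_of_dvd {d : ℕ} {B : Finset ℕ} (hd : 0 < d) (hB : ∀ b ∈ B, d ∣ b)
    (M : ℕ) : partitionsIn B (d * M) = partitionsIn (B.image (· / d)) M := by
  have hB' : (B.image (· / d)).image (d * ·) = B := by
    rw [Finset.image_image]
    conv_rhs => rw [← Finset.image_id (s := B)]
    exact Finset.image_congr fun b hb => Nat.mul_div_cancel' (hB b hb)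
  conv_lhs => rw [← hB']
  exact partitionsIn_image_mul hd _ M

theorem partitionsIn_eq_zero_of_not_dvd {d N : ℕ} {B : Finset ℕ} (hB : ∀ b ∈ B, d ∣ b)
    (hN : ¬ d ∣ N) : partitionsIn B N = 0 :=
  Finset.card_eq_zero.2 <| Finset.filter_eq_empty_iff.2 fun p _ hp =>
    hN (p.parts_sum ▸ Multiset.dvd_sum fun i hi => hB i (hp i hi))

theorem Finset.sum_range_eq_sum_progression {M : Type*} [AddCommMonoid M] {f : ℕ → M} {d u : ℕ}
    (hd : 0 < d) (K : ℕ) (hf : ∀ j ≤ u + K, j % d ≠ u → f j = 0) :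
    ∑ j ∈ range (u + K + 1), f j = ∑ ℓ ∈ range (K / d + 1), f (u + ℓ * d) := by
  rw [← Finset.sum_image fun _ _ _ _ h => Nat.eq_of_mul_eq_mul_right hd (Nat.add_left_cancel h)]
  refine (Finset.sum_subset (fun j hj => ?_) fun j hj hj' => hf j ?_ fun hju => hj' ?_).symm
  · obtain ⟨ℓ, hℓ, rfl⟩ := Finset.mem_image.1 hj
    have := (Nat.le_div_iff_mul_le hd).1 (Nat.lt_succ_iff.1 (Finset.mem_range.1 hℓ))
    exact Finset.mem_range.2 (by omega)
  · exact Nat.lt_succ_iff.1 (Finset.mem_range.1 hj)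
  · have hj' : u + j / d * d = j := by rw [← hju, mul_comm]; exact Nat.mod_add_div j d
    refine Finset.mem_image.2 ⟨j / d, Finset.mem_range.2 (Nat.lt_succ_iff.2 ?_), hj'⟩
    have := Nat.lt_succ_iff.1 (Finset.mem_range.1 hj)
    exact (Nat.le_div_iff_mul_le hd).2 (by omega)

/-- Let `A = B ∪ {aₖ}` be a set of `k ≥ 2` relatively prime positive integers
(`B = {a₁, ..., a_{k-1}}` nonempty, `aₖ ∉ B`), let `d = gcd(B)` and
`A' = {a/d : a ∈ B}`.  For `n ≥ (d-1)·aₖ`, let `u` be the unique integer with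
`0 ≤ u ≤ d-1` and `n ≡ u·aₖ (mod d)`, let `m = (n - u·aₖ)/d` and `r = ⌊m/aₖ⌋`.
Then `p_A(n) = Σ_{ℓ=0}^{r} p_{A'}(m - ℓ·aₖ)`. -/
theorem partitionsIn_eq_sum (B : Finset ℕ) (ak : ℕ) (hB : B.Nonempty)
    (hak : 0 < ak) (hpos : ∀ b ∈ B, 0 < b) (hmem : ak ∉ B)
    (d : ℕ) (hd : d = B.gcd id) (hgcd : Nat.gcd d ak = 1)
    (n : ℕ) (hn : (d - 1) * ak ≤ n)
    (u : ℕ) (hu : u ≤ d - 1) (hmod : n ≡ u * ak [MOD d])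
    (m : ℕ) (hm : m = (n - u * ak) / d)
    (r : ℕ) (hr : r = m / ak) :
    partitionsIn (insert ak B) n =
      ∑ ℓ ∈ Finset.range (r + 1), partitionsIn (B.image (· / d)) (m - ℓ * ak) := by
  have hdvd : ∀ b ∈ B, d ∣ b := fun b hb => hd ▸ Finset.gcd_dvd hb
  obtain ⟨b, hb⟩ := hB
  have hd0 : 0 < d := Nat.pos_of_dvd_of_pos (hdvd b hb) (hpos b hb)
  have hun : u * ak ≤ n := le_trans (Nat.mul_le_mul_right ak hu) hn
  have hnm : n = u * ak + d * m := by
    rw [hm, Nat.mul_div_cancel' ((Nat.modEq_iff_dvd' hun).1 hmod.symm)]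
    omega
  have hnak : n / ak = u + d * m / ak := by rw [hnm, mul_comm u, Nat.mul_add_div hak]
  have hr' : d * m / ak / d = r := by
    rw [Nat.div_div_eq_div_mul, mul_comm ak, Nat.mul_div_mul_left _ _ hd0, hr]
  rw [partitionsIn_insert hak hmem, hnak, Finset.sum_range_eq_sum_progression hd0, hr']
  · refine Finset.sum_congr rfl fun ℓ _ => ?_
    have hℓ : n - (u + ℓ * d) * ak = d * (m - ℓ * ak) := by
      rw [Nat.mul_sub, hnm, add_mul, Nat.add_sub_add_left]
      ring_nf
    rw [hℓ, partitionsIn_mul_of_dvd hd0 hdvd]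
  · intro j hj hju
    refine partitionsIn_eq_zero_of_not_dvd hdvd fun hdvdj => hju ?_
    have hjak : j * ak ≤ n := (Nat.le_div_iff_mul_le hak).1 (hnak ▸ hj)
    have hj : j ≡ u [MOD d] := Nat.ModEq.cancel_right_of_coprime hgcd
      (((Nat.modEq_iff_dvd' hjak).2 hdvdj).trans hmod)
    rw [hj, Nat.mod_eq_of_lt (by omega)]
end
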